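/- Suppose the law ν₀ of X₀ has a density V₀ : (0,∞) → [0,∞) with ‖V₀‖_∞ := ess sup V₀ < ∞, suppose f is Lipschitz on [0,1] with Lipschitz constant K, and suppose |α| · ‖V₀‖_∞ · K < 1. Let L be a solution of the McKean–Vlasov problem (MV) and for t > 0 define the left-limit measure ν_{t−}(S) := ℙ( X₀ + Z_t − α f(L_{t−}) ∈ S and X₀ + Z_s − α f(L_s) > 0 for all s < t ). Then for every t > 0 with L_{t−} < 1, one has inf{ x ∈ (0, 1 − L_{t−}] : ν_{t−}( [0, α(f(x + L_{t−}) − f(L_{t−}))] ) < x } = 0; that is, the jump size prescribed by the physical jump condition vanishes, so any physical solution is continuous. -/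

import Mathlib

/-! The law of `X₀` is dominated by `‖V₀‖_∞ · Lebesgue`, and convolving with the law of the
independent shift `Z_t − α f(L_{t−})` preserves this domination, since Lebesgue measure is
translation invariant. The sub-probability `ν_{t−}` is dominated by the law of
`X₀ + Z_t − α f(L_{t−})`, so `ν_{t−}[0, a] ≤ ‖V₀‖_∞ · |a|`. For
`a = α (f(x + L_{t−}) − f(L_{t−}))` the Lipschitz bound gives `|a| ≤ |α| K x`, hence
`ν_{t−}[0, a] ≤ |α| ‖V₀‖_∞ K x < x` for every `x ∈ (0, 1 − L_{t−}]`. -/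

open MeasureTheory ProbabilityTheory Filter Set Function
open scoped ENNReal

noncomputable section

variable {Ω : Type*} [MeasureSpace Ω]

/-- The event that the particle `X_s = X₀ + Z_s − α f(L_s)` has reached `(-∞, 0]` by time `t`. -/
def hitBy (X0 : Ω → ℝ) (Z : ℝ → Ω → ℝ) (f : ℝ → ℝ) (α : ℝ) (L : ℝ → ℝ) (t : ℝ) : Set Ω :=
  {ω | ∃ s ∈ Set.Icc (0 : ℝ) t, X0 ω + Z s ω - α * f (L s) ≤ 0}

/-- A solution of the McKean--Vlasov problem (MV). -/
def IsMVSolution (X0 : Ω → ℝ) (Z : ℝ → Ω → ℝ) (f : ℝ → ℝ) (α : ℝ) (L : ℝ → ℝ) : Prop :=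
  MonotoneOn L (Set.Ici 0) ∧ L 0 = 0 ∧ (∀ t, 0 ≤ t → L t ∈ Set.Icc (0 : ℝ) 1) ∧
  (∀ t, 0 ≤ t → ContinuousWithinAt L (Set.Ici t) t) ∧
  (∀ t, 0 ≤ t → L t = ((ℙ : Measure Ω) (hitBy X0 Z f α L t)).toReal)

/-- The left-limit measure
`ν_{t−}(S) = ℙ( X₀ + Z_t − α f(L_{t−}) ∈ S and X₀ + Z_s − α f(L_s) > 0 for all 0 ≤ s < t )`. -/
def subLawLeft (X0 : Ω → ℝ) (Z : ℝ → Ω → ℝ) (f : ℝ → ℝ) (α : ℝ) (L : ℝ → ℝ) (t : ℝ) :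
    Measure ℝ :=
  Measure.map (fun ω => X0 ω + Z t ω - α * f (Function.leftLim L t))
    ((ℙ : Measure Ω).restrict {ω | ∀ s ∈ Set.Ico (0 : ℝ) t, 0 < X0 ω + Z s ω - α * f (L s)})

open scoped Topology

theorem MonotoneOn.le_leftLim {α β : Type*} [LinearOrder α] [TopologicalSpace α]
    [OrderTopology α] [ConditionallyCompleteLinearOrder β] [TopologicalSpace β] [OrderTopology β]
    {L : α → β} {a t : α} (hL : MonotoneOn L (Ici a)) (hat : a < t) : L a ≤ leftLim L t := by
  set L' := fun s => L (max s a)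
  have hL' : Monotone L' := fun x y hxy =>
    hL (le_max_right x a) (le_max_right y a) (max_le_max hxy le_rfl)
  have hleft : leftLim L t = leftLim L' t := by
    rcases eq_or_neBot (𝓝[<] t) with hbot | _
    · simp [leftLim_eq_of_eq_bot _ hbot, L', max_eq_left hat.le]
    refine leftLim_eq_of_tendsto ((hL'.tendsto_leftLim t).congr' ?_)
    filter_upwards [Ioo_mem_nhdsLT hat] with s hs
    simp [L', max_eq_left hs.1.le]
  simpa [hleft, L'] using hL'.le_leftLim hat

theorem withDensity_ofReal_le_eLpNorm_top_smul {α : Type*} [MeasurableSpace α] (μ : Measure α)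
    (V : α → ℝ) : μ.withDensity (fun x => ENNReal.ofReal (V x)) ≤ eLpNorm V ⊤ μ • μ := by
  rw [← withDensity_const]
  refine withDensity_mono ?_
  filter_upwards [ae_le_eLpNormEssSup (f := V) (μ := μ)] with x hx
  rw [eLpNorm_exponent_top]
  exact (Real.ofReal_le_enorm _).trans hx

theorem ProbabilityTheory.IndepFun.map_add_le_smul {Ω G : Type*} [MeasurableSpace Ω]
    {μ : Measure Ω} [IsProbabilityMeasure μ] [AddGroup G] [MeasurableSpace G] [MeasurableAdd₂ G]
    [MeasurableAdd G] {ρ : Measure G} [ρ.IsAddRightInvariant] {X Y : Ω → G}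
    (hXY : IndepFun X Y μ) (hX : Measurable X) (hY : Measurable Y) {C : ℝ≥0∞}
    (hC : μ.map X ≤ C • ρ) : μ.map (X + Y) ≤ C • ρ := by
  rw [Measure.le_iff]
  intro s hs
  have hsum : MeasurableSet {p : G × G | p.1 + p.2 ∈ s} := measurable_add hs
  have hjoint := (indepFun_iff_map_prod_eq_prod_map_map hX.aemeasurable hY.aemeasurable).mp hXY
  calc μ.map (X + Y) s = (μ.map fun ω => (X ω, Y ω)) {p | p.1 + p.2 ∈ s} := by
        rw [Measure.map_apply (hX.add hY) hs, Measure.map_apply (hX.prodMk hY) hsum]; rfl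
    _ = ∫⁻ y, μ.map X ((· + y) ⁻¹' s) ∂(μ.map Y) := by
        rw [hjoint, Measure.prod_apply_symm hsum]; rfl
    _ ≤ ∫⁻ _, C * ρ s ∂(μ.map Y) := by
        refine lintegral_mono fun y => (hC _).trans_eq ?_
        rw [Measure.smul_apply, measure_preimage_add_right, smul_eq_mul]
    _ = C * ρ s := by
        rw [lintegral_const, Measure.map_apply hY MeasurableSet.univ, preimage_univ,
          measure_univ, mul_one]
    _ = (C • ρ) s := rfl

theorem toReal_measure_Icc_le {ν : Measure ℝ} {C : ℝ≥0∞} (hν : ν ≤ C • volume) (hC : C ≠ ∞)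
    (a : ℝ) : (ν (Icc 0 a)).toReal ≤ C.toReal * |a| := by
  have hle : ν (Icc 0 a) ≤ ENNReal.ofReal (C.toReal * |a|) := by
    calc ν (Icc 0 a) ≤ C * volume (Icc 0 a) := hν _
      _ ≤ C * ENNReal.ofReal |a| := by
          rw [Real.volume_Icc, sub_zero]; gcongr; exact le_abs_self a
      _ = ENNReal.ofReal (C.toReal * |a|) := by
          rw [ENNReal.ofReal_mul ENNReal.toReal_nonneg, ENNReal.ofReal_toReal hC]
  exact ENNReal.toReal_le_of_le_ofReal (by positivity) hle

theorem subLawLeft_le_smul_volume [IsProbabilityMeasure (ℙ : Measure Ω)] {X0 : Ω → ℝ}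
    {Z : ℝ → Ω → ℝ} {t : ℝ} (hX0 : Measurable X0) (hZ : Measurable (Z t))
    (hindep : IndepFun X0 (fun ω => fun t => Z t ω) ℙ) (f : ℝ → ℝ) (α : ℝ) (L : ℝ → ℝ)
    {C : ℝ≥0∞} (hC : (ℙ : Measure Ω).map X0 ≤ C • volume) :
    subLawLeft X0 Z f α L t ≤ C • volume := by
  set c := α * f (leftLim L t)
  have hY : Measurable fun ω => Z t ω - c := hZ.sub_const c
  have hXY : IndepFun X0 (fun ω => Z t ω - c) ℙ :=
    hindep.comp measurable_id (by fun_prop : Measurable fun z : ℝ → ℝ => z t - c)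
  have hsum : (X0 + fun ω => Z t ω - c) = fun ω => X0 ω + Z t ω - c := by
    funext ω; simp only [Pi.add_apply, add_sub_assoc]
  calc subLawLeft X0 Z f α L t ≤ (ℙ : Measure Ω).map (X0 + fun ω => Z t ω - c) := by
        rw [hsum]; exact Measure.map_mono Measure.restrict_le_self (hX0.add hZ |>.sub_const c)
    _ ≤ C • volume := hXY.map_add_le_smul hX0 hY hC

theorem mv_no_jumps_weak_feedback_general
    (hprob : IsProbabilityMeasure (ℙ : Measure Ω))
    (X0 : Ω → ℝ) (hX0meas : Measurable X0)
    (Z : ℝ → Ω → ℝ) (hZmeas : ∀ t, Measurable (Z t))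
    (hindep : IndepFun X0 (fun ω => fun t => Z t ω) ℙ)
    (f : ℝ → ℝ) (α : ℝ)
    (K : ℝ) (hK : ∀ y ∈ Set.Icc (0 : ℝ) 1, ∀ z ∈ Set.Icc (0 : ℝ) 1,
      |f y - f z| ≤ K * |y - z|)
    (V₀ : ℝ → ℝ)
    (hdens : Measure.map X0 (ℙ : Measure Ω)
      = volume.withDensity fun x => ENNReal.ofReal (V₀ x))
    (hV₀bdd : MemLp V₀ ⊤ volume)
    (hsmall : |α| * (eLpNorm V₀ ⊤ volume).toReal * K < 1)
    (L : ℝ → ℝ) (hL : IsMVSolution X0 Z f α L)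
    (t : ℝ) (ht : 0 < t) (hlt : Function.leftLim L t < 1) :
    ∀ ε > (0 : ℝ), ∃ x ∈ Set.Ioc (0 : ℝ) (1 - Function.leftLim L t),
      ((subLawLeft X0 Z f α L t)
          (Set.Icc 0 (α * (f (x + Function.leftLim L t) - f (Function.leftLim L t))))).toReal
        < x ∧ x < ε := by
  have := hprob
  obtain ⟨hLmono, hL0, -, -, -⟩ := hL
  set ℓ := leftLim L t
  set M := eLpNorm V₀ ⊤ volume
  have hℓ : 0 ≤ ℓ := hL0 ▸ hLmono.le_leftLim ht
  have hν : subLawLeft X0 Z f α L t ≤ M • volume := subLawLeft_le_smul_volume hX0meas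
    (hZmeas t) hindep f α L (hdens ▸ withDensity_ofReal_le_eLpNorm_top_smul volume V₀)
  intro ε hε
  set x := min (ε / 2) (1 - ℓ)
  have hx : 0 < x := lt_min (half_pos hε) (sub_pos.mpr hlt)
  refine ⟨x, ⟨hx, min_le_right _ _⟩, ?_, (min_le_left _ _).trans_lt (half_lt_self hε)⟩
  have hjump : |α * (f (x + ℓ) - f ℓ)| ≤ |α| * K * x := by
    have hlip := hK (x + ℓ) ⟨by linarith, by linarith [min_le_right (ε / 2) (1 - ℓ)]⟩ ℓ ⟨hℓ, hlt.le⟩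
    rw [add_sub_cancel_right, abs_of_pos hx] at hlip
    rw [abs_mul, mul_assoc]
    exact mul_le_mul_of_nonneg_left hlip (abs_nonneg α)
  calc _ ≤ M.toReal * |α * (f (x + ℓ) - f ℓ)| := toReal_measure_Icc_le hν hV₀bdd.2.ne _
    _ ≤ M.toReal * (|α| * K * x) := by gcongr
    _ < x := by nlinarith

/-- **(No jumps in the weak feedback regime.)** Suppose `ν₀` has a density `V₀` with
`‖V₀‖_∞ < ∞`, `f` is Lipschitz on `[0,1]` with constant `K`, and `|α| ⬝ ‖V₀‖_∞ ⬝ K < 1`.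
Then for every `t > 0` with `L_{t−} < 1`, the jump size prescribed by the physical jump
condition vanishes:
`inf{ x ∈ (0, 1 − L_{t−}] : ν_{t−}([0, α(f(x + L_{t−}) − f(L_{t−}))]) < x } = 0`,
i.e. there are such `x` below every `ε > 0`. -/
theorem mv_no_jumps_weak_feedback
    (hprob : IsProbabilityMeasure (ℙ : Measure Ω))
    (X0 : Ω → ℝ) (hX0meas : Measurable X0) (hX0pos : ∀ ω, 0 < X0 ω)
    (Z : ℝ → Ω → ℝ) (hZmeas : ∀ t, Measurable (Z t))
    (hZcont : ∀ ω, Continuous fun t => Z t ω)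
    (hindep : IndepFun X0 (fun ω => fun t => Z t ω) ℙ)
    (f : ℝ → ℝ) (hf : ContinuousOn f (Set.Icc 0 1)) (α : ℝ)
    (K : ℝ) (hK : ∀ y ∈ Set.Icc (0 : ℝ) 1, ∀ z ∈ Set.Icc (0 : ℝ) 1,
      |f y - f z| ≤ K * |y - z|)
    (V₀ : ℝ → ℝ) (hV₀meas : Measurable V₀) (hV₀nonneg : ∀ x, 0 ≤ V₀ x)
    (hV₀supp : ∀ x ≤ (0 : ℝ), V₀ x = 0)
    (hdens : Measure.map X0 (ℙ : Measure Ω)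
      = volume.withDensity fun x => ENNReal.ofReal (V₀ x))
    (hV₀bdd : MemLp V₀ ⊤ volume)
    (hsmall : |α| * (eLpNorm V₀ ⊤ volume).toReal * K < 1)
    (L : ℝ → ℝ) (hL : IsMVSolution X0 Z f α L)
    (t : ℝ) (ht : 0 < t) (hlt : Function.leftLim L t < 1) :
    ∀ ε > (0 : ℝ), ∃ x ∈ Set.Ioc (0 : ℝ) (1 - Function.leftLim L t),
      ((subLawLeft X0 Z f α L t)
          (Set.Icc 0 (α * (f (x + Function.leftLim L t) - f (Function.leftLim L t))))).toReal
        < x ∧ x < ε :=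
  mv_no_jumps_weak_feedback_general hprob X0 hX0meas Z hZmeas hindep f α K hK V₀ hdens hV₀bdd hsmall
    L hL t ht hlt
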